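/- In D(A) = (A × A, τ) with τ(a,b) = (a,a), for any MV-chain A with more than two elements, the equation τ(x) ∨ τ(¬x) = 1 fails: taking x = (c,c) for c with 0 < c ≤ ¬c, one has τ(x) ∨ τ(¬x) = (¬c, ¬c) < (1,1). -/

import Mathlib

/-- An MV-algebra `(A, ⊕, ¬, 0)`. -/
class MV (A : Type*) extends Zero A where
  oplus : A → A → A
  mvneg : A → A
  oplus_assoc : ∀ x y z : A, oplus (oplus x y) z = oplus x (oplus y z)
  oplus_comm : ∀ x y : A, oplus x y = oplus y x
  oplus_zero : ∀ x : A, oplus x 0 = x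
  mvneg_mvneg : ∀ x : A, mvneg (mvneg x) = x
  oplus_top : ∀ x : A, oplus x (mvneg 0) = mvneg 0
  luk : ∀ x y : A, oplus (mvneg (oplus (mvneg x) y)) y = oplus (mvneg (oplus (mvneg y) x)) x

namespace MV

variable {A : Type*} [MV A]

/-- The top element `1 = ¬0`. -/
def top : A := mvneg 0
/-- `x → y := ¬x ⊕ y`. -/
def imp (x y : A) : A := oplus (mvneg x) y
/-- `x ⊙ y := ¬(¬x ⊕ ¬y)`. -/
def odot (x y : A) : A := mvneg (oplus (mvneg x) (mvneg y))
/-- `x ⊖ y := ¬(¬x ⊕ y)`. -/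
def ominus (x y : A) : A := mvneg (oplus (mvneg x) y)
/-- Lattice join `x ∨ y := (x → y) → y`. -/
def mvsup (x y : A) : A := imp (imp x y) y
/-- Lattice meet `x ∧ y := x ⊙ (x → y)`. -/
def mvinf (x y : A) : A := odot x (imp x y)
/-- The lattice order: `x ≤ y` iff `x → y = 1`. -/
def mvle (x y : A) : Prop := imp x y = top
/-- Strict order. -/
def mvlt (x y : A) : Prop := mvle x y ∧ x ≠ y

/-- `(A, τ)` is an SMV-algebra. -/
structure IsSMV (τ : A → A) : Prop where
  map_top : τ top = top
  tau_oplus : ∀ x y : A, τ (oplus x y) = oplus (τ x) (τ (ominus y (odot x y)))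
  map_neg : ∀ x : A, τ (mvneg x) = mvneg (τ x)
  tau_fix : ∀ x y : A, τ (oplus (τ x) (τ y)) = oplus (τ x) (τ y)

/-- `(A, τ)` is a state morphism MV-algebra. -/
def IsSMMV (τ : A → A) : Prop := IsSMV τ ∧ ∀ x y : A, τ (oplus x y) = oplus (τ x) (τ y)

/-- An MV-filter. -/
structure IsFilter (F : Set A) : Prop where
  top_mem : top ∈ F
  mp : ∀ a b : A, a ∈ F → imp a b ∈ F → b ∈ F

/-- A `τ`-filter: an MV-filter closed under `τ`. -/
def IsTauFilter (τ : A → A) (F : Set A) : Prop := IsFilter F ∧ ∀ a ∈ F, τ a ∈ F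

/-- Subdirect irreducibility of an SMV-algebra: there is a minimum nontrivial `τ`-filter. -/
def SubdirIrrSMV (τ : A → A) : Prop :=
  ∃ F : Set A, IsTauFilter τ F ∧ F ≠ {top} ∧
    ∀ G : Set A, IsTauFilter τ G → G ≠ {top} → F ⊆ G

/-- A filter of the subalgebra/subhoop with universe `S`. -/
def IsFilterOn (S F : Set A) : Prop :=
  F ⊆ S ∧ top ∈ F ∧ ∀ a b : A, a ∈ F → b ∈ S → imp a b ∈ F → b ∈ F

/-- Subdirect irreducibility of the subalgebra/subhoop with universe `S`:
there is a minimum nontrivial filter on `S`. -/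
def SubdirIrrOn (S : Set A) : Prop :=
  ∃ F : Set A, IsFilterOn S F ∧ F ≠ {top} ∧
    ∀ G : Set A, IsFilterOn S G → G ≠ {top} → F ⊆ G

/-- The set `F_τ(A) = {a : τ a = 1}`. -/
def tauKernel (τ : A → A) : Set A := {a : A | τ a = top}

/-- Homomorphisms of MV-algebras. -/
structure IsMVHom {A B : Type*} [MV A] [MV B] (f : A → B) : Prop where
  map_oplus : ∀ x y : A, f (oplus x y) = oplus (f x) (f y)
  map_neg : ∀ x : A, f (mvneg x) = mvneg (f x)
  map_zero : f 0 = 0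

end MV

open MV

instance MV.instProd {A B : Type*} [MV A] [MV B] : MV (A × B) where
  oplus x y := (oplus x.1 y.1, oplus x.2 y.2)
  mvneg x := (mvneg x.1, mvneg x.2)
  oplus_assoc x y z := by simp [oplus_assoc]
  oplus_comm x y := by simp [oplus_comm x.1 y.1, oplus_comm x.2 y.2]
  oplus_zero x := by simp [oplus_zero]
  mvneg_mvneg x := by simp [mvneg_mvneg]
  oplus_top x := by simp [oplus_top]
  luk x y := by simp [luk]

instance MV.instPi {I : Type*} {A : I → Type*} [∀ i, MV (A i)] : MV (∀ i, A i) where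
  oplus x y i := oplus (x i) (y i)
  mvneg x i := mvneg (x i)
  oplus_assoc x y z := by funext i; simp [oplus_assoc]
  oplus_comm x y := by funext i; exact oplus_comm _ _
  oplus_zero x := by funext i; exact oplus_zero _
  mvneg_mvneg x := by funext i; exact mvneg_mvneg _
  oplus_top x := by funext i; exact oplus_top _
  luk x y := by funext i; exact luk _ _

/-- The diagonal operator of `D(A) = (A × A, τ)`, `τ (a,b) = (a,a)`. -/
def DTau {X : Type*} (p : X × X) : X × X := (p.1, p.1)

namespace MV

section Basic

variable {A : Type*} [MV A]

theorem zero_oplus (x : A) : oplus 0 x = x := by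
  rw [oplus_comm, oplus_zero]

theorem mvneg_top : mvneg (top : A) = 0 := mvneg_mvneg 0

theorem mvneg_injective : Function.Injective (mvneg : A → A) :=
  Function.LeftInverse.injective mvneg_mvneg

theorem mvneg_eq_top_iff {x : A} : mvneg x = top ↔ x = 0 := by
  rw [top, mvneg_injective.eq_iff]

theorem mvle_top (x : A) : mvle x top := oplus_top (mvneg x)

theorem mvsup_eq_right_of_mvle {x y : A} (h : mvle x y) : mvsup x y = y := by
  rw [mvsup, h, imp, mvneg_top, zero_oplus]

end Basic

section Prod

variable {A B : Type*} [MV A] [MV B]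

theorem mk_mvle_mk {a c : A} {b d : B} : mvle (a, b) (c, d) ↔ mvle a c ∧ mvle b d :=
  Prod.mk_inj

end Prod

end MV

theorem diag_boolean_equation_fails_general {A : Type*} [MV A]
    (c : A) (hc0 : c ≠ 0) (hcc : mvle c (mvneg c)) :
    mvsup (DTau ((c, c) : A × A)) (DTau (mvneg ((c, c) : A × A)))
        = ((mvneg c, mvneg c) : A × A) ∧
    mvle ((mvneg c, mvneg c) : A × A) (top : A × A) ∧
    ((mvneg c, mvneg c) : A × A) ≠ (top : A × A) :=
  ⟨mvsup_eq_right_of_mvle (mk_mvle_mk.2 ⟨hcc, hcc⟩), mvle_top _,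
    fun h => hc0 (mvneg_eq_top_iff.1 (congrArg Prod.fst h))⟩

/-- in `D(A)` for an MV-chain `A` with more than two elements, the
equation `τ(x) ∨ τ(¬x) = 1` fails: taking `x = (c, c)` for `c` with `0 < c ≤ ¬c`,
one has `τ(x) ∨ τ(¬x) = (¬c, ¬c) < (1, 1)`. -/
theorem diag_boolean_equation_fails {A : Type*} [MV A]
    (hchain : ∀ x y : A, mvle x y ∨ mvle y x)
    (c : A) (hc0 : c ≠ 0) (hcc : mvle c (mvneg c)) :
    mvsup (DTau ((c, c) : A × A)) (DTau (mvneg ((c, c) : A × A)))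
        = ((mvneg c, mvneg c) : A × A) ∧
    mvle ((mvneg c, mvneg c) : A × A) (top : A × A) ∧
    ((mvneg c, mvneg c) : A × A) ≠ (top : A × A) :=
  diag_boolean_equation_fails_general c hc0 hcc
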